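/- For every k > 0 there exists a₀ > 0 such that for every a ∈ (0,a₀), every x ∈ ℝ^N ∖ Λ and every (u,v) ∈ ℝ²: u H_u(x,u,v) + v H_v(x,u,v) ≤ (1/k)(V(x)u² + W(x)v²). -/

import Mathlib

open MeasureTheory Real Set Filter

noncomputable section

abbrev Euc (N : ℕ) := EuclideanSpace ℝ (Fin N)

/-- Partial derivative of a two-variable real function in the first variable. -/
def pdU (f : ℝ → ℝ → ℝ) (u v : ℝ) : ℝ := deriv (fun t => f t v) u

/-- Partial derivative of a two-variable real function in the second variable. -/
def pdV (f : ℝ → ℝ → ℝ) (u v : ℝ) : ℝ := deriv (fun t => f u t) v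

/-- Integrand of the Gagliardo seminorm. -/
def gagKer (N : ℕ) (s : ℝ) (u : Euc N → ℝ) (z : Euc N × Euc N) : ℝ :=
  (u z.1 - u z.2) ^ 2 / ‖z.1 - z.2‖ ^ ((N : ℝ) + 2 * s)

/-- Squared Gagliardo seminorm `[u]²`. -/
def gagSq (N : ℕ) (s : ℝ) (u : Euc N → ℝ) : ℝ := ∫ z, gagKer N s u z

/-- Membership in the fractional Sobolev space `H^s(ℝ^N)`. -/
def MemHs (N : ℕ) (s : ℝ) (u : Euc N → ℝ) : Prop :=
  MemLp u 2 (volume : Measure (Euc N)) ∧ Integrable (gagKer N s u)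

/-- The nonlinearity `Q` together with assumptions (Q1)-(Q6); `Q` is `C²` on the closed
first quadrant and extended by `0` outside of it.  Its partial derivatives are `pdU Q`,
`pdV Q`. -/
structure QSetup (p : ℝ) : Type where
  Q : ℝ → ℝ → ℝ
  smooth : ContDiffOn ℝ 2 (fun z : ℝ × ℝ => Q z.1 z.2) (Ici 0 ×ˢ Ici 0)
  ext_zero : ∀ u v : ℝ, u ≤ 0 ∨ v ≤ 0 → Q u v = 0
  q1 : ∀ t : ℝ, 0 < t → ∀ u v : ℝ, 0 ≤ u → 0 ≤ v → Q (t * u) (t * v) = t ^ p * Q u v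
  q2 : ∃ C : ℝ, 0 < C ∧ ∀ u v : ℝ, 0 ≤ u → 0 ≤ v →
        |pdU Q u v| + |pdV Q u v| ≤ C * (u ^ (p - 1) + v ^ (p - 1))
  q3 : pdU Q 0 1 = 0 ∧ pdV Q 1 0 = 0
  q4 : pdU Q 1 0 = 0 ∧ pdV Q 0 1 = 0
  q5 : ∀ u v : ℝ, 0 < u → 0 < v → 0 < Q u v
  q6 : ∀ u v : ℝ, 0 ≤ u → 0 ≤ v → 0 ≤ pdU Q u v ∧ 0 ≤ pdV Q u v

/-- The potentials `V`, `W`, the set `Λ`, the point `x₀` and `ρ₀`, with (H1)-(H3). -/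
structure PotSetup (N : ℕ) : Type where
  V : Euc N → ℝ
  W : Euc N → ℝ
  Λ : Set (Euc N)
  x₀ : Euc N
  ρ₀ : ℝ
  contV : Continuous V
  contW : Continuous W
  openΛ : IsOpen Λ
  bddΛ : Bornology.IsBounded Λ
  x₀mem : x₀ ∈ Λ
  ρ₀pos : 0 < ρ₀
  h1 : ∀ x ∈ frontier Λ, ρ₀ ≤ V x ∧ ρ₀ ≤ W x
  h2 : V x₀ < ρ₀ ∧ W x₀ < ρ₀
  h3 : (∀ x, V x₀ ≤ V x) ∧ (∀ x, W x₀ ≤ W x) ∧ 0 < V x₀ ∧ 0 < W x₀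

/-- `‖(u,v)‖²_ξ` for the autonomous problem with frozen potentials `V(ξ)`, `W(ξ)`. -/
def normSqXi {N : ℕ} (s : ℝ) (P : PotSetup N) (ξ : Euc N) (u v : Euc N → ℝ) : ℝ :=
  gagSq N s u + gagSq N s v + ∫ x, (P.V ξ * u x ^ 2 + P.W ξ * v x ^ 2)

/-- The autonomous energy functional `J_ξ`. -/
def Jxi {N : ℕ} (s : ℝ) {p : ℝ} (QS : QSetup p) (P : PotSetup N) (ξ : Euc N)
    (u v : Euc N → ℝ) : ℝ :=
  (1 / 2) * normSqXi s P ξ u v - ∫ x, QS.Q (u x) (v x)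

/-- The Nehari manifold `N_ξ` of the autonomous functional `J_ξ`. -/
def NehariXi {N : ℕ} (s : ℝ) {p : ℝ} (QS : QSetup p) (P : PotSetup N) (ξ : Euc N) :
    Set ((Euc N → ℝ) × (Euc N → ℝ)) :=
  {w | MemHs N s w.1 ∧ MemHs N s w.2 ∧ w ≠ (0, 0) ∧
    normSqXi s P ξ w.1 w.2 =
      ∫ x, (w.1 x * pdU QS.Q (w.1 x) (w.2 x) + w.2 x * pdV QS.Q (w.1 x) (w.2 x))}

/-- `C(ξ) = inf_{(u,v) ∈ N_ξ} J_ξ(u,v)`. -/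
def Cmin {N : ℕ} (s : ℝ) {p : ℝ} (QS : QSetup p) (P : PotSetup N) (ξ : Euc N) : ℝ :=
  sInf ((fun w : (Euc N → ℝ) × (Euc N → ℝ) => Jxi s QS P ξ w.1 w.2) '' NehariXi s QS P ξ)

/-- The cut-off function `η` used in the penalization, for a given `a > 0`. -/
structure EtaSetup (a cη : ℝ) : Type where
  η : ℝ → ℝ
  smooth : ContDiff ℝ 2 η
  anti : Antitone η
  mem01 : ∀ t, η t ∈ Icc (0 : ℝ) 1
  eq_one : ∀ t, t ≤ a → η t = 1
  eq_zero : ∀ t, 5 * a ≤ t → η t = 0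
  bd1 : ∀ t, |deriv η t| ≤ cη / a
  bd2 : ∀ t, |deriv (deriv η) t| ≤ cη / a ^ 2

/-- `A = max { Q(u,v)/(u²+v²) : a ≤ √(u²+v²) ≤ 5a }`. -/
def Aconst {p : ℝ} (QS : QSetup p) (a : ℝ) : ℝ :=
  sSup ((fun z : ℝ × ℝ => QS.Q z.1 z.2 / (z.1 ^ 2 + z.2 ^ 2)) ''
    {z : ℝ × ℝ | a ≤ Real.sqrt (z.1 ^ 2 + z.2 ^ 2) ∧ Real.sqrt (z.1 ^ 2 + z.2 ^ 2) ≤ 5 * a})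

/-- The penalized nonlinearity `Q̂`. -/
def Qhat {p : ℝ} (QS : QSetup p) (η : ℝ → ℝ) (A u v : ℝ) : ℝ :=
  η (Real.sqrt (u ^ 2 + v ^ 2)) * QS.Q u v +
    (1 - η (Real.sqrt (u ^ 2 + v ^ 2))) * (A * (u ^ 2 + v ^ 2))

/-- The penalized function `H(x,u,v) = χ_Λ(x) Q(u,v) + (1-χ_Λ(x)) Q̂(u,v)`. -/
def Hpen {N : ℕ} {p : ℝ} (QS : QSetup p) (η : ℝ → ℝ) (A : ℝ) (Λ : Set (Euc N))
    (x : Euc N) (u v : ℝ) : ℝ :=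
  Λ.indicator (fun _ => (1 : ℝ)) x * QS.Q u v +
    (1 - Λ.indicator (fun _ => (1 : ℝ)) x) * Qhat QS η A u v

/-- `H_u`. -/
def HpenU {N : ℕ} {p : ℝ} (QS : QSetup p) (η : ℝ → ℝ) (A : ℝ) (Λ : Set (Euc N))
    (x : Euc N) (u v : ℝ) : ℝ := pdU (Hpen QS η A Λ x) u v

/-- `H_v`. -/
def HpenV {N : ℕ} {p : ℝ} (QS : QSetup p) (η : ℝ → ℝ) (A : ℝ) (Λ : Set (Euc N))
    (x : Euc N) (u v : ℝ) : ℝ := pdV (Hpen QS η A Λ x) u v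

/-- `H_uu`. -/
def HpenUU {N : ℕ} {p : ℝ} (QS : QSetup p) (η : ℝ → ℝ) (A : ℝ) (Λ : Set (Euc N))
    (x : Euc N) (u v : ℝ) : ℝ := pdU (HpenU QS η A Λ x) u v

/-- `H_uv`. -/
def HpenUV {N : ℕ} {p : ℝ} (QS : QSetup p) (η : ℝ → ℝ) (A : ℝ) (Λ : Set (Euc N))
    (x : Euc N) (u v : ℝ) : ℝ := pdV (HpenU QS η A Λ x) u v

/-- `H_vv`. -/
def HpenVV {N : ℕ} {p : ℝ} (QS : QSetup p) (η : ℝ → ℝ) (A : ℝ) (Λ : Set (Euc N))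
    (x : Euc N) (u v : ℝ) : ℝ := pdV (HpenV QS η A Λ x) u v

/-- `‖(u,v)‖²_ε`. -/
def normSqE {N : ℕ} (s : ℝ) (P : PotSetup N) (ε : ℝ) (u v : Euc N → ℝ) : ℝ :=
  gagSq N s u + gagSq N s v + ∫ x, (P.V (ε • x) * u x ^ 2 + P.W (ε • x) * v x ^ 2)

/-- Membership in the space `X_ε`. -/
def MemXe {N : ℕ} (s : ℝ) (P : PotSetup N) (ε : ℝ) (u v : Euc N → ℝ) : Prop :=
  MemHs N s u ∧ MemHs N s v ∧
    Integrable (fun x => P.V (ε • x) * u x ^ 2 + P.W (ε • x) * v x ^ 2)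

/-- The penalized energy functional `J_ε`. -/
def Je {N : ℕ} (s : ℝ) {p : ℝ} (QS : QSetup p) (η : ℝ → ℝ) (A : ℝ) (P : PotSetup N)
    (ε : ℝ) (u v : Euc N → ℝ) : ℝ :=
  (1 / 2) * normSqE s P ε u v - ∫ x, Hpen QS η A P.Λ (ε • x) (u x) (v x)

/-- The pairing `⟨J'_ε(u,v),(φ,ψ)⟩`. -/
def pairJe {N : ℕ} (s : ℝ) {p : ℝ} (QS : QSetup p) (η : ℝ → ℝ) (A : ℝ) (P : PotSetup N)
    (ε : ℝ) (u v φ ψ : Euc N → ℝ) : ℝ :=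
  (∫ z : Euc N × Euc N, (u z.1 - u z.2) * (φ z.1 - φ z.2) / ‖z.1 - z.2‖ ^ ((N : ℝ) + 2 * s)) +
  (∫ z : Euc N × Euc N, (v z.1 - v z.2) * (ψ z.1 - ψ z.2) / ‖z.1 - z.2‖ ^ ((N : ℝ) + 2 * s)) +
  (∫ x, (P.V (ε • x) * u x * φ x + P.W (ε • x) * v x * ψ x)) -
  (∫ x, (φ x * HpenU QS η A P.Λ (ε • x) (u x) (v x) +
         ψ x * HpenV QS η A P.Λ (ε • x) (u x) (v x)))

/-- The Nehari manifold `N_ε` of the penalized functional `J_ε`. -/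
def NehariE {N : ℕ} (s : ℝ) {p : ℝ} (QS : QSetup p) (η : ℝ → ℝ) (A : ℝ) (P : PotSetup N)
    (ε : ℝ) : Set ((Euc N → ℝ) × (Euc N → ℝ)) :=
  {w | MemXe s P ε w.1 w.2 ∧ w ≠ (0, 0) ∧
    normSqE s P ε w.1 w.2 =
      ∫ x, (w.1 x * HpenU QS η A P.Λ (ε • x) (w.1 x) (w.2 x) +
            w.2 x * HpenV QS η A P.Λ (ε • x) (w.1 x) (w.2 x))}

end

/-! On the complement of `Λ` we have `H = Q̂`, and for `r = √(u² + v²)`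
`u Q̂_u + v Q̂_v = η'(r) r (Q - A r²) + η(r) (u Q_u + v Q_v) + 2 (1 - η(r)) A r²`.
Every term is `O(a^(p-2) r²)` with a constant independent of `a`: `η'` vanishes beyond `5a` and
`|η'(r)| r ≤ 5 c_η` below it, while by `p`-homogeneity `Q` and `u Q_u + v Q_v` are `O(r^p)`, which is
`O((5a)^(p-2) r²)` for `r ≤ 5a`; the same estimate gives `A ≤ M (5a)^(p-2)`. As `p > 2`, for small `a`
the constant drops below `min(V(x₀), W(x₀))/k`, and (H3) concludes. -/

open scoped Topology

lemma rpow_le_rpow_sub_two_mul_sq {p r R : ℝ} (hp : 2 ≤ p) (hr : 0 ≤ r) (hrR : r ≤ R) :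
    r ^ p ≤ R ^ (p - 2) * r ^ 2 := by
  calc r ^ p = r ^ (p - 2) * r ^ 2 := by
        rw [← Real.rpow_two, ← Real.rpow_add' hr (by linarith), sub_add_cancel]
    _ ≤ R ^ (p - 2) * r ^ 2 := by gcongr

lemma exists_pos_forall_mul_rpow_le (K : ℝ) {q ε : ℝ} (hq : 0 < q) (hε : 0 < ε) :
    ∃ a₀ > 0, ∀ a : ℝ, 0 < a → a < a₀ → K * a ^ q ≤ ε := by
  have hlim : Tendsto (fun a : ℝ => K * a ^ q) (𝓝 0) (𝓝 0) := by
    simpa [Real.zero_rpow hq.ne'] using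
      ((Real.continuousAt_rpow_const 0 q (Or.inr hq.le)).const_mul K).tendsto
  obtain ⟨a₀, ha₀, h⟩ := Metric.eventually_nhds_iff.mp (hlim.eventually (gt_mem_nhds hε))
  exact ⟨a₀, ha₀, fun a ha haa₀ => (h (by rwa [Real.dist_0_eq_abs, abs_of_pos ha])).le⟩

/- Differentiability of `F` is needed only off `t = 0`, where both sides vanish: `Q` itself need not
be differentiable across the coordinate axes. -/
lemma mul_deriv_cutoff_blend {η F : ℝ → ℝ} (hη : Differentiable ℝ η) {F' t : ℝ} (A c : ℝ)
    (hF : t ≠ 0 → HasDerivAt F F' t) :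
    t * deriv (fun s => η (√(s ^ 2 + c ^ 2)) * F s +
        (1 - η (√(s ^ 2 + c ^ 2))) * (A * (s ^ 2 + c ^ 2))) t =
      deriv η (√(t ^ 2 + c ^ 2)) * (t ^ 2 / √(t ^ 2 + c ^ 2)) * (F t - A * (t ^ 2 + c ^ 2)) +
        η (√(t ^ 2 + c ^ 2)) * (t * F') + (1 - η (√(t ^ 2 + c ^ 2))) * (2 * A * t ^ 2) := by
  rcases eq_or_ne t 0 with rfl | ht
  · simp
  have hsq : HasDerivAt (fun s => s ^ 2 + c ^ 2) (2 * t) t := by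
    simpa using (hasDerivAt_pow 2 t).add_const (c ^ 2)
  have hηr := (hη _).hasDerivAt.comp t (hsq.sqrt (by positivity))
  have hblend : HasDerivAt (fun s => η (√(s ^ 2 + c ^ 2)) * F s +
      (1 - η (√(s ^ 2 + c ^ 2))) * (A * (s ^ 2 + c ^ 2))) _ t :=
    (hηr.mul (hF ht)).add (((hasDerivAt_const t 1).sub hηr).mul (hsq.const_mul A))
  rw [hblend.deriv]
  simp only [Function.comp_apply, Pi.sub_apply]
  have : √(t ^ 2 + c ^ 2) ≠ 0 := by positivity
  field_simp
  ring

namespace EtaSetup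

lemma cη_nonneg {a cη : ℝ} (E : EtaSetup a cη) (ha : 0 < a) : 0 ≤ cη := by
  have h := (abs_nonneg _).trans (E.bd1 0)
  rwa [le_div_iff₀ ha, zero_mul] at h

variable {a cη : ℝ} (E : EtaSetup a cη)

lemma deriv_eq_zero_of_gt {r : ℝ} (hr : 5 * a < r) : deriv E.η r = 0 := by
  have : E.η =ᶠ[𝓝 r] fun _ => 0 := by
    filter_upwards [Ioi_mem_nhds hr] with t ht using E.eq_zero t ht.le
  rw [this.deriv_eq, deriv_const]

lemma abs_deriv_mul_le (ha : 0 < a) {r : ℝ} (hr0 : 0 ≤ r) (hr : r ≤ 5 * a) :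
    |deriv E.η r| * r ≤ 5 * cη :=
  calc |deriv E.η r| * r ≤ cη / a * (5 * a) :=
        mul_le_mul (E.bd1 r) hr hr0 ((abs_nonneg _).trans (E.bd1 r))
    _ = 5 * cη := by field_simp

end EtaSetup

namespace QSetup

variable {p : ℝ} (QS : QSetup p)

lemma Q_nonneg (u v : ℝ) : 0 ≤ QS.Q u v := by
  by_cases huv : 0 < u ∧ 0 < v
  · exact (QS.q5 u v huv.1 huv.2).le
  · rw [not_and_or, not_lt, not_lt] at huv
    exact (QS.ext_zero u v huv).ge

lemma exists_le_rpow : ∃ M, 0 ≤ M ∧ ∀ u v : ℝ, QS.Q u v ≤ M * √(u ^ 2 + v ^ 2) ^ p := by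
  set K : Set (ℝ × ℝ) := (Ici 0 ×ˢ Ici 0) ∩ {z | z.1 ^ 2 + z.2 ^ 2 = 1}
  have hK : IsCompact K := by
    refine (isCompact_Icc (a := ((-1 : ℝ), (-1 : ℝ))) (b := (1, 1))).of_isClosed_subset
      ((isClosed_Ici.prod isClosed_Ici).inter (isClosed_eq (by fun_prop) continuous_const)) ?_
    rintro ⟨x, y⟩ ⟨-, hxy⟩
    simp only [mem_ofPred_eq] at hxy
    simp only [mem_Icc, Prod.mk_le_mk]
    refine ⟨⟨?_, ?_⟩, ?_, ?_⟩ <;> nlinarith [sq_nonneg x, sq_nonneg y]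
  obtain ⟨M, hM⟩ := hK.bddAbove_image (QS.smooth.continuousOn.mono inter_subset_left)
  refine ⟨max M 0, le_max_right _ _, fun u v => ?_⟩
  by_cases huv : 0 < u ∧ 0 < v
  · obtain ⟨hu, hv⟩ := huv
    set r := √(u ^ 2 + v ^ 2)
    have hr : 0 < r := by positivity
    have hr2 : r ^ 2 = u ^ 2 + v ^ 2 := Real.sq_sqrt (by positivity)
    have hmem : (u / r, v / r) ∈ K := by
      refine ⟨⟨div_nonneg hu.le hr.le, div_nonneg hv.le hr.le⟩, ?_⟩
      simp only [mem_ofPred_eq, div_pow, ← add_div, ← hr2]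
      exact div_self (by positivity)
    have hscale := QS.q1 r hr (u / r) (v / r) (by positivity) (by positivity)
    rw [mul_div_cancel₀ _ hr.ne', mul_div_cancel₀ _ hr.ne'] at hscale
    rw [hscale, mul_comm]
    gcongr
    exact (hM ⟨_, hmem, rfl⟩).trans (le_max_left _ _)
  · rw [not_and_or, not_lt, not_lt] at huv
    rw [QS.ext_zero u v huv]
    positivity

lemma mul_pdU_eq_zero {u v : ℝ} (h : u ≤ 0 ∨ v ≤ 0) : u * pdU QS.Q u v = 0 := by
  rcases h with hu | hv
  · rcases hu.lt_or_eq with hu | rfl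
    · have : (fun t => QS.Q t v) =ᶠ[𝓝 u] fun _ => 0 := by
        filter_upwards [Iio_mem_nhds hu] with t ht using QS.ext_zero t v (Or.inl ht.le)
      simp [pdU, this.deriv_eq]
    · exact zero_mul _
  · have : (fun t => QS.Q t v) = fun _ => 0 := funext fun t => QS.ext_zero t v (Or.inr hv)
    simp [pdU, this]

lemma mul_pdV_eq_zero {u v : ℝ} (h : u ≤ 0 ∨ v ≤ 0) : v * pdV QS.Q u v = 0 := by
  rcases h with hu | hv
  · have : (fun t => QS.Q u t) = fun _ => 0 := funext fun t => QS.ext_zero u t (Or.inl hu)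
    simp [pdV, this]
  · rcases hv.lt_or_eq with hv | rfl
    · have : (fun t => QS.Q u t) =ᶠ[𝓝 v] fun _ => 0 := by
        filter_upwards [Iio_mem_nhds hv] with t ht using QS.ext_zero u t (Or.inr ht.le)
      simp [pdV, this.deriv_eq]
    · exact zero_mul _

lemma exists_radial_deriv_le_rpow (hp : 1 ≤ p) :
    ∃ C, 0 ≤ C ∧ ∀ u v : ℝ, u * pdU QS.Q u v + v * pdV QS.Q u v ≤ C * √(u ^ 2 + v ^ 2) ^ p := by
  obtain ⟨C, hC, hbound⟩ := QS.q2
  refine ⟨2 * C, by positivity, fun u v => ?_⟩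
  set r := √(u ^ 2 + v ^ 2)
  by_cases huv : 0 < u ∧ 0 < v
  · obtain ⟨hu, hv⟩ := huv
    have hur : u ≤ r := Real.le_sqrt_of_sq_le (by nlinarith)
    have hvr : v ≤ r := Real.le_sqrt_of_sq_le (by nlinarith)
    have hr : 0 < r := hu.trans_le hur
    calc u * pdU QS.Q u v + v * pdV QS.Q u v ≤ u * |pdU QS.Q u v| + v * |pdV QS.Q u v| := by
          gcongr <;> exact le_abs_self _
      _ ≤ r * (|pdU QS.Q u v| + |pdV QS.Q u v|) := by
          rw [mul_add]; gcongr
      _ ≤ r * (C * (r ^ (p - 1) + r ^ (p - 1))) := by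
          gcongr
          refine (hbound u v hu.le hv.le).trans ?_
          gcongr
      _ = 2 * C * r ^ p := by
          rw [Real.rpow_sub_one hr.ne']
          field_simp
          ring
  · rw [not_and_or, not_lt, not_lt] at huv
    rw [QS.mul_pdU_eq_zero huv, QS.mul_pdV_eq_zero huv, add_zero]
    positivity

lemma differentiableAt_of_pos {u v : ℝ} (hu : 0 < u) (hv : 0 < v) :
    DifferentiableAt ℝ (fun z : ℝ × ℝ => QS.Q z.1 z.2) (u, v) :=
  (QS.smooth.contDiffAt (prod_mem_nhds (Ici_mem_nhds hu) (Ici_mem_nhds hv))).differentiableAt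
    (by norm_num)

lemma differentiableAt_fst {u : ℝ} (v : ℝ) (hu : u ≠ 0) :
    DifferentiableAt ℝ (fun t => QS.Q t v) u := by
  by_cases hv : v ≤ 0
  · have : (fun t => QS.Q t v) = fun _ => 0 := funext fun t => QS.ext_zero t v (Or.inr hv)
    rw [this]
    exact differentiableAt_const 0
  rcases hu.lt_or_gt with hu | hu
  · refine (differentiableAt_const (0 : ℝ)).congr_of_eventuallyEq ?_
    filter_upwards [Iio_mem_nhds hu] with t ht using QS.ext_zero t v (Or.inl ht.le)
  · exact (QS.differentiableAt_of_pos hu (not_le.mp hv)).comp (f := fun t => (t, v)) u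
      (by fun_prop)

lemma differentiableAt_snd (u : ℝ) {v : ℝ} (hv : v ≠ 0) :
    DifferentiableAt ℝ (fun t => QS.Q u t) v := by
  by_cases hu : u ≤ 0
  · have : (fun t => QS.Q u t) = fun _ => 0 := funext fun t => QS.ext_zero u t (Or.inl hu)
    rw [this]
    exact differentiableAt_const 0
  rcases hv.lt_or_gt with hv | hv
  · refine (differentiableAt_const (0 : ℝ)).congr_of_eventuallyEq ?_
    filter_upwards [Iio_mem_nhds hv] with t ht using QS.ext_zero u t (Or.inr ht.le)
  · exact (QS.differentiableAt_of_pos (not_le.mp hu) hv).comp (f := fun t => (u, t)) v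
      (by fun_prop)

lemma radial_deriv_Qhat {η : ℝ → ℝ} (hη : Differentiable ℝ η) (A u v : ℝ) :
    u * pdU (Qhat QS η A) u v + v * pdV (Qhat QS η A) u v =
      deriv η (√(u ^ 2 + v ^ 2)) * √(u ^ 2 + v ^ 2) * (QS.Q u v - A * (u ^ 2 + v ^ 2)) +
        η (√(u ^ 2 + v ^ 2)) * (u * pdU QS.Q u v + v * pdV QS.Q u v) +
        (1 - η (√(u ^ 2 + v ^ 2))) * (2 * A * (u ^ 2 + v ^ 2)) := by
  have hU : u * pdU (Qhat QS η A) u v =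
      deriv η (√(u ^ 2 + v ^ 2)) * (u ^ 2 / √(u ^ 2 + v ^ 2)) * (QS.Q u v - A * (u ^ 2 + v ^ 2)) +
        η (√(u ^ 2 + v ^ 2)) * (u * pdU QS.Q u v) +
        (1 - η (√(u ^ 2 + v ^ 2))) * (2 * A * u ^ 2) :=
    mul_deriv_cutoff_blend hη A v fun hu => (QS.differentiableAt_fst v hu).hasDerivAt
  have hV : v * pdV (Qhat QS η A) u v =
      deriv η (√(u ^ 2 + v ^ 2)) * (v ^ 2 / √(u ^ 2 + v ^ 2)) * (QS.Q u v - A * (u ^ 2 + v ^ 2)) +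
        η (√(u ^ 2 + v ^ 2)) * (v * pdV QS.Q u v) +
        (1 - η (√(u ^ 2 + v ^ 2))) * (2 * A * v ^ 2) := by
    simp only [pdV, Qhat, add_comm (u ^ 2)]
    exact mul_deriv_cutoff_blend hη A u fun hv => (QS.differentiableAt_snd u hv).hasDerivAt
  have hsum : u ^ 2 / √(u ^ 2 + v ^ 2) + v ^ 2 / √(u ^ 2 + v ^ 2) = √(u ^ 2 + v ^ 2) := by
    rw [← add_div, Real.div_sqrt]
  rw [hU, hV]
  linear_combination (deriv η (√(u ^ 2 + v ^ 2)) * (QS.Q u v - A * (u ^ 2 + v ^ 2))) * hsum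

lemma Aconst_nonneg (a : ℝ) : 0 ≤ Aconst QS a := by
  refine Real.sSup_nonneg ?_
  rintro _ ⟨z, -, rfl⟩
  exact div_nonneg (QS.Q_nonneg _ _) (by positivity)

lemma Aconst_le (hp : 2 ≤ p) {M : ℝ} (hM0 : 0 ≤ M)
    (hM : ∀ u v : ℝ, QS.Q u v ≤ M * √(u ^ 2 + v ^ 2) ^ p) {a : ℝ} (ha : 0 < a) :
    Aconst QS a ≤ M * (5 * a) ^ (p - 2) := by
  refine Real.sSup_le ?_ (by positivity)
  rintro _ ⟨⟨u, v⟩, ⟨hlow, hup⟩, rfl⟩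
  dsimp only at hlow hup ⊢
  have hR : 0 < u ^ 2 + v ^ 2 := Real.sqrt_pos.mp (ha.trans_le hlow)
  rw [div_le_iff₀ hR]
  calc QS.Q u v ≤ M * √(u ^ 2 + v ^ 2) ^ p := hM u v
    _ ≤ M * ((5 * a) ^ (p - 2) * √(u ^ 2 + v ^ 2) ^ 2) := by
        gcongr
        exact rpow_le_rpow_sub_two_mul_sq hp (Real.sqrt_nonneg _) hup
    _ = M * (5 * a) ^ (p - 2) * (u ^ 2 + v ^ 2) := by
        rw [Real.sq_sqrt hR.le]
        ring

lemma radial_deriv_Qhat_le (hp : 2 ≤ p) {a cη : ℝ} (ha : 0 < a) (E : EtaSetup a cη) {M C : ℝ}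
    (hM0 : 0 ≤ M) (hM : ∀ u v : ℝ, QS.Q u v ≤ M * √(u ^ 2 + v ^ 2) ^ p) (hC0 : 0 ≤ C)
    (hC : ∀ u v : ℝ, u * pdU QS.Q u v + v * pdV QS.Q u v ≤ C * √(u ^ 2 + v ^ 2) ^ p)
    (u v : ℝ) :
    u * pdU (Qhat QS E.η (Aconst QS a)) u v + v * pdV (Qhat QS E.η (Aconst QS a)) u v ≤
      (5 * cη * M + C + 2 * M) * ((5 * a) ^ (p - 2) * (u ^ 2 + v ^ 2)) := by
  rw [QS.radial_deriv_Qhat (E.smooth.differentiable (by norm_num))]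
  set A := Aconst QS a
  set r := √(u ^ 2 + v ^ 2)
  set B := (5 * a) ^ (p - 2) * (u ^ 2 + v ^ 2)
  have hB : 0 ≤ B := by positivity
  have hA0 : 0 ≤ A * (u ^ 2 + v ^ 2) := mul_nonneg (QS.Aconst_nonneg a) (by positivity)
  have hAB : A * (u ^ 2 + v ^ 2) ≤ M * B := by
    rw [← mul_assoc]
    gcongr
    exact QS.Aconst_le hp hM0 hM ha
  have hcη := E.cη_nonneg ha
  obtain ⟨hη0, hη1⟩ := E.mem01 r
  have hT3 : (1 - E.η r) * (2 * A * (u ^ 2 + v ^ 2)) ≤ 2 * M * B := by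
    nlinarith [mul_nonneg hη0 hA0]
  rcases le_or_gt r (5 * a) with hr5 | hr5
  · have hpow : r ^ p ≤ B := by
      have := rpow_le_rpow_sub_two_mul_sq hp (Real.sqrt_nonneg _) hr5
      rwa [Real.sq_sqrt (by positivity)] at this
    have hQ : QS.Q u v ≤ M * B := (hM u v).trans (by gcongr)
    have hT1 : deriv E.η r * r * (QS.Q u v - A * (u ^ 2 + v ^ 2)) ≤ 5 * cη * (M * B) :=
      calc _ ≤ |deriv E.η r * r * (QS.Q u v - A * (u ^ 2 + v ^ 2))| := le_abs_self _
        _ = |deriv E.η r| * r * |QS.Q u v - A * (u ^ 2 + v ^ 2)| := by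
            rw [abs_mul, abs_mul, abs_of_nonneg (Real.sqrt_nonneg _)]
        _ ≤ 5 * cη * (M * B) := by
            have := QS.Q_nonneg u v
            exact mul_le_mul (E.abs_deriv_mul_le ha (Real.sqrt_nonneg _) hr5)
              (abs_sub_le_iff.2 ⟨by linarith, by linarith⟩) (abs_nonneg _) (by positivity)
    have hT2 : E.η r * (u * pdU QS.Q u v + v * pdV QS.Q u v) ≤ C * B := by
      have hD := (hC u v).trans (mul_le_mul_of_nonneg_left hpow hC0)
      rcases le_total 0 (u * pdU QS.Q u v + v * pdV QS.Q u v) with hD0 | hD0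
      · exact (mul_le_of_le_one_left hD0 hη1).trans hD
      · exact (mul_nonpos_of_nonneg_of_nonpos hη0 hD0).trans (by positivity)
    linarith
  · rw [E.deriv_eq_zero_of_gt hr5, E.eq_zero r hr5.le]
    nlinarith [mul_nonneg (mul_nonneg hcη hM0) hB, mul_nonneg hC0 hB]

lemma exists_radial_deriv_Qhat_le (hp : 2 < p) (cη : ℝ) :
    ∃ K, ∀ a, 0 < a → ∀ E : EtaSetup a cη, ∀ u v : ℝ,
      u * pdU (Qhat QS E.η (Aconst QS a)) u v + v * pdV (Qhat QS E.η (Aconst QS a)) u v ≤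
        K * a ^ (p - 2) * (u ^ 2 + v ^ 2) := by
  obtain ⟨M, hM0, hM⟩ := QS.exists_le_rpow
  obtain ⟨C, hC0, hC⟩ := QS.exists_radial_deriv_le_rpow (by linarith)
  refine ⟨(5 * cη * M + C + 2 * M) * 5 ^ (p - 2), fun a ha E u v => ?_⟩
  refine (QS.radial_deriv_Qhat_le hp.le ha E hM0 hM hC0 hC u v).trans_eq ?_
  rw [Real.mul_rpow (by norm_num) ha.le]
  ring

end QSetup

lemma Hpen_of_notMem {N : ℕ} {p : ℝ} (QS : QSetup p) (η : ℝ → ℝ) (A : ℝ) {Λ : Set (Euc N)}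
    {x : Euc N} (hx : x ∉ Λ) : Hpen QS η A Λ x = Qhat QS η A := by
  funext u v
  simp [Hpen, indicator_of_notMem hx]

theorem stmt3_general {N : ℕ} (s p : ℝ)
    (hp : 2 < p ∧ p < 2 * (N : ℝ) / ((N : ℝ) - 2 * s))
    (QS : QSetup p) (P : PotSetup N) (cη : ℝ) :
    ∀ k : ℝ, 0 < k → ∃ a₀ > 0, ∀ a : ℝ, 0 < a → a < a₀ → ∀ E : EtaSetup a cη,
      ∀ x ∉ P.Λ, ∀ u v : ℝ,
        u * HpenU QS E.η (Aconst QS a) P.Λ x u v +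
        v * HpenV QS E.η (Aconst QS a) P.Λ x u v ≤
          (1 / k) * (P.V x * u ^ 2 + P.W x * v ^ 2) := by
  intro k hk
  obtain ⟨K, hK⟩ := QS.exists_radial_deriv_Qhat_le hp.1 cη
  set m := min (P.V P.x₀) (P.W P.x₀)
  have hm : 0 < m := lt_min P.h3.2.2.1 P.h3.2.2.2
  obtain ⟨a₀, ha₀, hsmall⟩ := exists_pos_forall_mul_rpow_le K (sub_pos.2 hp.1) (div_pos hm hk)
  refine ⟨a₀, ha₀, fun a ha haa₀ E x hx u v => ?_⟩
  have hVW : m * (u ^ 2 + v ^ 2) ≤ P.V x * u ^ 2 + P.W x * v ^ 2 := by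
    rw [mul_add]
    gcongr
    · exact (min_le_left _ _).trans (P.h3.1 x)
    · exact (min_le_right _ _).trans (P.h3.2.1 x)
  simp only [HpenU, HpenV, Hpen_of_notMem QS E.η _ hx]
  calc _ ≤ K * a ^ (p - 2) * (u ^ 2 + v ^ 2) := hK a ha E u v
    _ ≤ m / k * (u ^ 2 + v ^ 2) := by
        gcongr
        exact hsmall a ha haa₀
    _ ≤ 1 / k * (P.V x * u ^ 2 + P.W x * v ^ 2) := by
        rw [div_mul_eq_mul_div, one_div_mul_eq_div]
        gcongr

/-- for every `k > 0` there is `a₀ > 0` such that for all `a ∈ (0,a₀)`,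
`x ∉ Λ` and `(u,v) ∈ ℝ²`, `u H_u + v H_v ≤ (1/k)(V(x)u² + W(x)v²)`. -/
theorem stmt3 {N : ℕ} (s p : ℝ) (hs : 0 < s ∧ s < 1) (hN : 2 * s < (N : ℝ))
    (hp : 2 < p ∧ p < 2 * (N : ℝ) / ((N : ℝ) - 2 * s))
    (QS : QSetup p) (P : PotSetup N) (cη : ℝ) (hcη : 0 < cη) :
    ∀ k : ℝ, 0 < k → ∃ a₀ > 0, ∀ a : ℝ, 0 < a → a < a₀ → ∀ E : EtaSetup a cη,
      ∀ x ∉ P.Λ, ∀ u v : ℝ,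
        u * HpenU QS E.η (Aconst QS a) P.Λ x u v +
        v * HpenV QS E.η (Aconst QS a) P.Λ x u v ≤
          (1 / k) * (P.V x * u ^ 2 + P.W x * v ^ 2) :=
  stmt3_general s p hp QS P cη
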